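/- Let T be a bounded linear operator on H admitting an A-adjoint T♯. Then w_A(T) ≥ √( (1/4)‖T♯∘T + T∘T♯‖_A + (1/2)| ‖Re_A(T)‖_A² − ‖Im_A(T)‖_A² | ). -/

import Mathlib

/-!
With `R = √A` one has `⟨x, y⟩_A = ⟨R x, R y⟩`, so `‖·‖_A` is a seminorm with the
Cauchy–Schwarz inequality and the parallelogram law.

An `A`-selfadjoint `S` is `A`-bounded with constant `‖S‖` (Reid's inequality): from
`‖S x‖_A² = ⟨S² x, x⟩_A ≤ ‖S² x‖_A ‖x‖_A`, iterated along `S^(2^k)` and compared with the crude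
bound `‖S^(2^k) x‖_A ≤ ‖R‖ ‖S‖^(2^k) ‖x‖`. Polarization then gives `‖S‖_A ≤ w_A(S)`.

`Re_A(T)` and `Im_A(T)` are `A`-selfadjoint and `⟨Re_A(T) x, x⟩_A`, `⟨Im_A(T) x, x⟩_A` are, up to
sign, the real and imaginary parts of `⟨T x, x⟩_A`; hence `r = ‖Re_A(T)‖_A` and
`i = ‖Im_A(T)‖_A` are at most `w = w_A(T)`. Finally `T♯T + TT♯ = 2 (Re_A(T)² + Im_A(T)²)` gives
`‖T♯T + TT♯‖_A ≤ 2 (r² + i²)`, and `(r² + i²)/2 + |r² - i²|/2 = max r² i² ≤ w²`.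
-/

noncomputable section

open Complex ContinuousLinearMap

variable {H : Type*} [NormedAddCommGroup H] [InnerProductSpace ℂ H] [CompleteSpace H]

/-- The `A`-inner product `⟨x, y⟩_A = ⟨A x, y⟩`. -/
def innA (A : H →L[ℂ] H) (x y : H) : ℂ := @inner ℂ _ _ (A x) y

/-- The `A`-seminorm `‖x‖_A = √⟨A x, x⟩`. -/
def vnormA (A : H →L[ℂ] H) (x : H) : ℝ := Real.sqrt (innA A x x).re

/-- The `A`-operator seminorm `‖T‖_A = sup {‖T x‖_A : ‖x‖_A = 1}`. -/
def opnormA (A T : H →L[ℂ] H) : ℝ :=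
  sSup {r : ℝ | ∃ x : H, vnormA A x = 1 ∧ r = vnormA A (T x)}

/-- The `A`-numerical radius `w_A(T) = sup {|⟨T x, x⟩_A| : ‖x‖_A = 1}`. -/
def wA (A T : H →L[ℂ] H) : ℝ :=
  sSup {r : ℝ | ∃ x : H, vnormA A x = 1 ∧ r = ‖innA A (T x) x‖}

/-- The `A`-numerical range `W_A(T) = {⟨T x, x⟩_A : ‖x‖_A = 1}`. -/
def WA (A T : H →L[ℂ] H) : Set ℂ :=
  {z : ℂ | ∃ x : H, vnormA A x = 1 ∧ z = innA A (T x) x}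

/-- `Re_A(T) = (T + T♯)/2`, given an `A`-adjoint `Ts` of `T`. -/
def ReA (T Ts : H →L[ℂ] H) : H →L[ℂ] H := (2 : ℂ)⁻¹ • (T + Ts)

/-- `Im_A(T) = (T - T♯)/(2i)`, given an `A`-adjoint `Ts` of `T`. -/
def ImA (T Ts : H →L[ℂ] H) : H →L[ℂ] H := (2 * Complex.I)⁻¹ • (T - Ts)

/-- `Ts` is an `A`-adjoint of `T`, i.e. `A ∘ Ts = T* ∘ A`. -/
def IsAAdjoint (A T Ts : H →L[ℂ] H) : Prop :=
  A.comp Ts = (ContinuousLinearMap.adjoint T).comp A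

lemma le_of_forall_pow_le_mul_pow {x y C : ℝ} (hy : 0 ≤ y)
    (h : ∀ n : ℕ, x ^ 2 ^ n ≤ C * y ^ 2 ^ n) : x ≤ y := by
  by_contra! hyx
  rcases hy.eq_or_lt with rfl | hy
  · have := h 0
    simp only [pow_zero, pow_one, mul_zero] at this
    linarith
  · have hq : 1 < x / y := (one_lt_div hy).2 hyx
    obtain ⟨n, hn⟩ := pow_unbounded_of_one_lt C hq
    have hC : (x / y) ^ 2 ^ n ≤ C := by
      rw [div_pow, div_le_iff₀ (by positivity)]
      exact h n
    linarith [pow_le_pow_right₀ hq.le (Nat.lt_two_pow_self (n := n)).le]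

lemma le_mul_of_sq_le_mul_succ {c : ℕ → ℝ} {m s K : ℝ} (hc : ∀ k, 0 ≤ c k) (hm : 0 ≤ m)
    (hs : 0 ≤ s) (hstep : ∀ k, c k ^ 2 ≤ m * c (k + 1)) (hgrowth : ∀ k, c k ≤ K * s ^ 2 ^ k) :
    c 0 ≤ s * m := by
  rcases hm.eq_or_lt with rfl | hm
  · nlinarith [hstep 0, hc 0]
  have hpow : ∀ n, (c 0 / m) ^ 2 ^ n ≤ c n / m := by
    intro n
    induction n with
    | zero => simp
    | succ n ih =>
      calc (c 0 / m) ^ 2 ^ (n + 1) = ((c 0 / m) ^ 2 ^ n) ^ 2 := by rw [pow_succ, pow_mul]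
        _ ≤ (c n / m) ^ 2 := pow_le_pow_left₀ (by have := hc 0; positivity) ih 2
        _ ≤ c (n + 1) / m := by
          rw [div_pow, div_le_div_iff₀ (by positivity) hm]
          nlinarith [hstep n]
  have hq : c 0 / m ≤ s := le_of_forall_pow_le_mul_pow (C := K / m) hs fun n =>
    (hpow n).trans <| (div_le_div_of_nonneg_right (hgrowth n) hm.le).trans_eq (by ring)
  rwa [div_le_iff₀ hm] at hq

section

omit [CompleteSpace H]

variable {A : H →L[ℂ] H}

lemma vnormA_nonneg (x : H) : 0 ≤ vnormA A x := Real.sqrt_nonneg _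

lemma vnormA_smul (c : ℂ) (x : H) : vnormA A (c • x) = ‖c‖ * vnormA A x := by
  rw [vnormA, vnormA, innA, map_smul, inner_smul_left, inner_smul_right, ← mul_assoc, conj_mul',
    ← ofReal_pow, re_ofReal_mul, Real.sqrt_mul (by positivity), Real.sqrt_sq (norm_nonneg c),
    innA]

lemma opnormA_nonneg (T : H →L[ℂ] H) : 0 ≤ opnormA A T :=
  Real.sSup_nonneg (by rintro r ⟨x, -, rfl⟩; exact vnormA_nonneg _)

lemma wA_nonneg (T : H →L[ℂ] H) : 0 ≤ wA A T :=
  Real.sSup_nonneg (by rintro r ⟨x, -, rfl⟩; exact norm_nonneg _)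

lemma opnormA_le {T : H →L[ℂ] H} {C : ℝ} (hC : 0 ≤ C)
    (h : ∀ x, vnormA A x = 1 → vnormA A (T x) ≤ C) : opnormA A T ≤ C :=
  Real.sSup_le (by rintro r ⟨x, hx, rfl⟩; exact h x hx) hC

lemma wA_le {T : H →L[ℂ] H} {C : ℝ} (hC : 0 ≤ C)
    (h : ∀ x, vnormA A x = 1 → ‖innA A (T x) x‖ ≤ C) : wA A T ≤ C :=
  Real.sSup_le (by rintro r ⟨x, hx, rfl⟩; exact h x hx) hC

/-- `hC` makes the supremum a genuine one: `sSup` of a set unbounded above is `0`. -/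
lemma le_sSup_mul_vnormA_pow {g : H → ℝ} {k : ℕ} {C : ℝ} (hk : k ≠ 0)
    (hg : ∀ (c : ℂ) x, g (c • x) = ‖c‖ ^ k * g x) (hC : ∀ x, g x ≤ C * vnormA A x ^ k) (x : H) :
    g x ≤ sSup {r | ∃ y, vnormA A y = 1 ∧ r = g y} * vnormA A x ^ k := by
  rcases (vnormA_nonneg (A := A) x).eq_or_lt with h0 | hpos
  · simpa [← h0, hk] using hC x
  set c : ℂ := (((vnormA A x)⁻¹ : ℝ) : ℂ)
  have hc : ‖c‖ = (vnormA A x)⁻¹ := by simp [c, hpos.le]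
  have hbdd : BddAbove {r | ∃ y, vnormA A y = 1 ∧ r = g y} :=
    ⟨C, by rintro r ⟨y, hy, rfl⟩; simpa [hy] using hC y⟩
  have hle : g (c • x) ≤ sSup {r | ∃ y, vnormA A y = 1 ∧ r = g y} :=
    le_csSup hbdd ⟨c • x, by rw [vnormA_smul, hc, inv_mul_cancel₀ hpos.ne'], rfl⟩
  rw [hg, hc, inv_pow, inv_mul_le_iff₀ (by positivity)] at hle
  linarith

lemma vnormA_apply_le_opnormA {T : H →L[ℂ] H} {C : ℝ}
    (hT : ∀ x, vnormA A (T x) ≤ C * vnormA A x) (x : H) :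
    vnormA A (T x) ≤ opnormA A T * vnormA A x := by
  simpa [opnormA] using le_sSup_mul_vnormA_pow (A := A) (g := fun x => vnormA A (T x)) one_ne_zero
    (fun c y => by simp [vnormA_smul]) (by simpa using hT) x

lemma norm_innA_apply_self_le_wA {T : H →L[ℂ] H} {C : ℝ}
    (hT : ∀ x, ‖innA A (T x) x‖ ≤ C * vnormA A x ^ 2) (x : H) :
    ‖innA A (T x) x‖ ≤ wA A T * vnormA A x ^ 2 :=
  le_sSup_mul_vnormA_pow (g := fun x => ‖innA A (T x) x‖) two_ne_zero
    (fun c y => by simp [innA, sq]; ring) hT x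

lemma wA_le_wA {S T : H →L[ℂ] H} {C : ℝ} (hT : ∀ x, ‖innA A (T x) x‖ ≤ C * vnormA A x ^ 2)
    (h : ∀ x, ‖innA A (S x) x‖ ≤ ‖innA A (T x) x‖) : wA A S ≤ wA A T :=
  wA_le (wA_nonneg T) fun x hx => by
    simpa [hx] using (h x).trans (norm_innA_apply_self_le_wA hT x)

lemma comp_add_comp_eq_reA_imA (T Ts : H →L[ℂ] H) :
    Ts.comp T + T.comp Ts =
      (2 : ℂ) • ((ReA T Ts).comp (ReA T Ts) + (ImA T Ts).comp (ImA T Ts)) := by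
  have hI : (2 * I)⁻¹ * (2 * I)⁻¹ = -(4 : ℂ)⁻¹ := by
    rw [← mul_inv, mul_mul_mul_comm, I_mul_I, ← inv_neg]; norm_num
  simp only [ReA, ImA, ← mul_def, smul_mul_smul_comm, hI, mul_add, add_mul, mul_sub, sub_mul]
  module

end

section Seminorm

variable {A : H →L[ℂ] H}

lemma innA_eq_inner_sqrt (hA : A.IsPositive) (x y : H) :
    innA A x y = inner ℂ (CFC.sqrt A x) (CFC.sqrt A y) := by
  have hR : IsSelfAdjoint (CFC.sqrt A) := .of_nonneg (CFC.sqrt_nonneg A)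
  have hRR : CFC.sqrt A * CFC.sqrt A = A :=
    CFC.sqrt_mul_sqrt_self A ((nonneg_iff_isPositive A).2 hA)
  rw [innA]
  conv_lhs => rw [← hRR]
  exact (isSelfAdjoint_iff_isSymmetric.1 hR) _ _

lemma vnormA_eq_norm_sqrt (hA : A.IsPositive) (x : H) : vnormA A x = ‖CFC.sqrt A x‖ := by
  rw [vnormA, innA_eq_inner_sqrt hA, ← RCLike.re_to_complex, inner_self_eq_norm_sq,
    Real.sqrt_sq (norm_nonneg _)]

lemma innA_self (hA : A.IsPositive) (x : H) : innA A x x = (vnormA A x ^ 2 : ℝ) := by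
  simp [innA_eq_inner_sqrt hA, vnormA_eq_norm_sqrt hA, inner_self_eq_norm_sq_to_K]

lemma norm_innA_le (hA : A.IsPositive) (x y : H) :
    ‖innA A x y‖ ≤ vnormA A x * vnormA A y := by
  simpa only [innA_eq_inner_sqrt hA, vnormA_eq_norm_sqrt hA] using norm_inner_le_norm _ _

lemma innA_conj_symm (hA : IsSelfAdjoint A) (x y : H) :
    starRingEnd ℂ (innA A x y) = innA A y x := by
  rw [innA, innA, inner_conj_symm]
  exact ((isSelfAdjoint_iff_isSymmetric.1 hA) y x).symm

lemma vnormA_add_le (hA : A.IsPositive) (x y : H) :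
    vnormA A (x + y) ≤ vnormA A x + vnormA A y := by
  simpa only [vnormA_eq_norm_sqrt hA, map_add] using norm_add_le _ _

lemma vnormA_le (hA : A.IsPositive) (x : H) : vnormA A x ≤ ‖CFC.sqrt A‖ * ‖x‖ := by
  simpa only [vnormA_eq_norm_sqrt hA] using le_opNorm _ x

lemma vnormA_add_sq_add_vnormA_sub_sq (hA : A.IsPositive) (x y : H) :
    vnormA A (x + y) ^ 2 + vnormA A (x - y) ^ 2 = 2 * (vnormA A x ^ 2 + vnormA A y ^ 2) := by
  simpa only [vnormA_eq_norm_sqrt hA, map_add, map_sub, ← sq, ← two_mul]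
    using parallelogram_law_with_norm ℂ (CFC.sqrt A x) (CFC.sqrt A y)

lemma norm_innA_apply_self_le {T : H →L[ℂ] H} (hA : A.IsPositive) {C : ℝ}
    (hT : ∀ x, vnormA A (T x) ≤ C * vnormA A x) (x : H) :
    ‖innA A (T x) x‖ ≤ C * vnormA A x ^ 2 :=
  calc ‖innA A (T x) x‖ ≤ vnormA A (T x) * vnormA A x := norm_innA_le hA _ _
    _ ≤ C * vnormA A x * vnormA A x := by gcongr; exacts [vnormA_nonneg x, hT x]
    _ = C * vnormA A x ^ 2 := by ring

end Seminorm

namespace IsAAdjoint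

variable {A T Ts U Us S : H →L[ℂ] H}

lemma innA_apply (h : IsAAdjoint A T Ts) (x y : H) : innA A (Ts x) y = innA A x (T y) := by
  rw [innA, innA, show A (Ts x) = adjoint T (A x) from DFunLike.congr_fun h x, adjoint_inner_left]

lemma symm (hA : IsSelfAdjoint A) (h : IsAAdjoint A T Ts) : IsAAdjoint A Ts T := by
  have h' := congrArg adjoint h
  rw [adjoint_comp, adjoint_comp, adjoint_adjoint, ← star_eq_adjoint A, hA.star_eq] at h'
  exact h'.symm

lemma comp (h : IsAAdjoint A T Ts) (h' : IsAAdjoint A U Us) :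
    IsAAdjoint A (T.comp U) (Us.comp Ts) := by
  rw [IsAAdjoint, adjoint_comp, ← comp_assoc, h', comp_assoc, h, comp_assoc]

lemma pow (hS : IsAAdjoint A S S) (n : ℕ) : IsAAdjoint A (S ^ n) (S ^ n) := by
  induction n with
  | zero => exact show A * 1 = star 1 * A by simp
  | succ n ih =>
    have := ih.comp hS
    rwa [← mul_def, ← mul_def, ← pow_succ, ← pow_succ'] at this

lemma reA (hA : IsSelfAdjoint A) (h : IsAAdjoint A T Ts) : IsAAdjoint A (ReA T Ts) (ReA T Ts) := by
  have h' := h.symm hA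
  simp only [IsAAdjoint, ReA] at h h' ⊢
  rw [comp_smul, comp_add, h, h', map_smulₛₗ, map_add, smul_comp, add_comp, add_comm]
  simp [RCLike.conj_ofNat]

lemma imA (hA : IsSelfAdjoint A) (h : IsAAdjoint A T Ts) : IsAAdjoint A (ImA T Ts) (ImA T Ts) := by
  have h' := h.symm hA
  simp only [IsAAdjoint, ImA] at h h' ⊢
  rw [comp_smul, comp_sub, h, h', map_smulₛₗ, map_sub, smul_comp, sub_comp]
  simp only [map_inv₀, map_mul, RCLike.conj_ofNat, conj_I]
  module

lemma innA_reA_apply_self (hA : IsSelfAdjoint A) (h : IsAAdjoint A T Ts) (x : H) :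
    innA A (ReA T Ts x) x = (innA A (T x) x).re := by
  have hc : innA A (Ts x) x = starRingEnd ℂ (innA A (T x) x) := by
    rw [h.innA_apply, innA_conj_symm hA]
  simp only [ReA, innA, smul_apply, add_apply, map_smul, map_add, inner_smul_left,
    inner_add_left] at hc ⊢
  rw [hc, add_conj]
  simp [RCLike.conj_ofNat]

-- The sign: `inner` is conjugate-linear in its first argument.
lemma innA_imA_apply_self (hA : IsSelfAdjoint A) (h : IsAAdjoint A T Ts) (x : H) :
    innA A (ImA T Ts x) x = -(innA A (T x) x).im := by
  have hc : innA A (Ts x) x = starRingEnd ℂ (innA A (T x) x) := by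
    rw [h.innA_apply, innA_conj_symm hA]
  simp only [ImA, innA, smul_apply, sub_apply, map_smul, map_sub, inner_smul_left,
    inner_sub_left] at hc ⊢
  rw [hc, sub_conj]
  simp only [map_inv₀, map_mul, RCLike.conj_ofNat, conj_I]
  push_cast
  field_simp

lemma vnormA_apply_sq_le (hA : A.IsPositive) (h : IsAAdjoint A T Ts) (x : H) :
    vnormA A (T x) ^ 2 ≤ vnormA A x * vnormA A (Ts (T x)) := by
  calc vnormA A (T x) ^ 2 = ‖innA A (Ts (T x)) x‖ := by
        rw [h.innA_apply, innA_self hA, norm_real, Real.norm_of_nonneg (by positivity)]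
    _ ≤ vnormA A (Ts (T x)) * vnormA A x := norm_innA_le hA _ _
    _ = vnormA A x * vnormA A (Ts (T x)) := mul_comm _ _

/-- Reid's inequality: an `A`-selfadjoint operator is `A`-bounded, with constant `‖S‖`. -/
lemma vnormA_apply_le_norm_mul (hA : A.IsPositive) (hS : IsAAdjoint A S S) (x : H) :
    vnormA A (S x) ≤ ‖S‖ * vnormA A x := by
  have hstep (k : ℕ) : vnormA A ((S ^ 2 ^ k) x) ^ 2 ≤
      vnormA A x * vnormA A ((S ^ 2 ^ (k + 1)) x) := by
    rw [show S ^ 2 ^ (k + 1) = S ^ 2 ^ k * S ^ 2 ^ k by rw [pow_succ, pow_mul, sq],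
      mul_apply_eq_comp]
    exact (hS.pow _).vnormA_apply_sq_le hA x
  have hgrowth (k : ℕ) : vnormA A ((S ^ 2 ^ k) x) ≤ ‖CFC.sqrt A‖ * ‖x‖ * ‖S‖ ^ 2 ^ k :=
    calc vnormA A ((S ^ 2 ^ k) x) ≤ ‖CFC.sqrt A‖ * ‖(S ^ 2 ^ k) x‖ := vnormA_le hA _
      _ ≤ ‖CFC.sqrt A‖ * (‖S‖ ^ 2 ^ k * ‖x‖) := by
        gcongr
        exact (le_opNorm _ _).trans (by gcongr; exact norm_pow_le' S (by positivity))
      _ = ‖CFC.sqrt A‖ * ‖x‖ * ‖S‖ ^ 2 ^ k := by ring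
  simpa using le_mul_of_sq_le_mul_succ (fun _ => vnormA_nonneg _) (vnormA_nonneg x)
    (norm_nonneg S) hstep hgrowth

lemma vnormA_apply_le_sqrt_mul (hA : A.IsPositive) (h : IsAAdjoint A T Ts) (x : H) :
    vnormA A (T x) ≤ √‖Ts.comp T‖ * vnormA A x := by
  have hTsT : IsAAdjoint A (Ts.comp T) (Ts.comp T) := (h.symm hA.isSelfAdjoint).comp h
  refine (pow_le_pow_iff_left₀ (vnormA_nonneg _)
    (mul_nonneg (Real.sqrt_nonneg _) (vnormA_nonneg x)) two_ne_zero).1 ?_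
  calc vnormA A (T x) ^ 2 ≤ vnormA A x * vnormA A (Ts (T x)) := h.vnormA_apply_sq_le hA x
    _ ≤ vnormA A x * (‖Ts.comp T‖ * vnormA A x) := by
      gcongr
      exacts [vnormA_nonneg x, hTsT.vnormA_apply_le_norm_mul hA x]
    _ = (√‖Ts.comp T‖ * vnormA A x) ^ 2 := by rw [mul_pow, Real.sq_sqrt (norm_nonneg _)]; ring

lemma re_innA_add_sub (hA : IsSelfAdjoint A) (hS : IsAAdjoint A S S) (x y : H) :
    (innA A (S (x + y)) (x + y)).re - (innA A (S (x - y)) (x - y)).re =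
      4 * (innA A (S x) y).re := by
  have hyx : innA A (S y) x = starRingEnd ℂ (innA A (S x) y) := by
    rw [hS.innA_apply, innA_conj_symm hA]
  simp only [innA, map_add, map_sub, inner_add_left, inner_add_right, inner_sub_left,
    inner_sub_right] at hyx ⊢
  rw [hyx]
  simp only [add_re, sub_re, conj_re]
  ring

lemma opnormA_le_wA (hA : A.IsPositive) (hS : IsAAdjoint A S S) : opnormA A S ≤ wA A S := by
  have hw (z : H) : |(innA A (S z) z).re| ≤ wA A S * vnormA A z ^ 2 :=
    (abs_re_le_norm _).trans <| norm_innA_apply_self_le_wA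
      (norm_innA_apply_self_le hA (hS.vnormA_apply_le_norm_mul hA)) z
  refine opnormA_le (wA_nonneg S) fun x hx => ?_
  rcases (vnormA_nonneg (A := A) (S x)).eq_or_lt with h0 | hpos
  · exact h0 ▸ wA_nonneg S
  set v : H := (((vnormA A (S x))⁻¹ : ℝ) : ℂ) • S x
  have hv : vnormA A v = 1 := by
    rw [vnormA_smul, norm_real, Real.norm_of_nonneg (by positivity), inv_mul_cancel₀ hpos.ne']
  have hre : (innA A (S x) v).re = vnormA A (S x) := by
    rw [innA, inner_smul_right, ← innA, innA_self hA, ← ofReal_mul, ofReal_re]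
    field_simp
  have hpar := vnormA_add_sq_add_vnormA_sub_sq hA x v
  rw [hx, hv] at hpar
  have hpol := hS.re_innA_add_sub hA.isSelfAdjoint x v
  rw [hre] at hpol
  have hsum : wA A S * vnormA A (x + v) ^ 2 + wA A S * vnormA A (x - v) ^ 2 = 4 * wA A S := by
    rw [← mul_add, hpar]; ring
  linarith [hw (x + v), hw (x - v), le_abs_self (innA A (S (x + v)) (x + v)).re,
    neg_abs_le (innA A (S (x - v)) (x - v)).re]

lemma vnormA_apply_le_opnormA_mul (hA : A.IsPositive) (hS : IsAAdjoint A S S) (x : H) :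
    vnormA A (S x) ≤ opnormA A S * vnormA A x :=
  vnormA_apply_le_opnormA (hS.vnormA_apply_le_norm_mul hA) x

lemma vnormA_apply_apply_le (hA : A.IsPositive) (hS : IsAAdjoint A S S) (x : H) :
    vnormA A (S (S x)) ≤ opnormA A S ^ 2 * vnormA A x :=
  calc vnormA A (S (S x)) ≤ opnormA A S * vnormA A (S x) := hS.vnormA_apply_le_opnormA_mul hA _
    _ ≤ opnormA A S * (opnormA A S * vnormA A x) := by
      gcongr
      exacts [opnormA_nonneg S, hS.vnormA_apply_le_opnormA_mul hA x]
    _ = opnormA A S ^ 2 * vnormA A x := by ring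

lemma opnormA_comp_add_comp_le (hA : A.IsPositive) (h : IsAAdjoint A T Ts) :
    opnormA A (Ts.comp T + T.comp Ts) ≤
      2 * (opnormA A (ReA T Ts) ^ 2 + opnormA A (ImA T Ts) ^ 2) := by
  rw [comp_add_comp_eq_reA_imA]
  refine opnormA_le (by positivity) fun x hx => ?_
  calc vnormA A (((2 : ℂ) • ((ReA T Ts).comp (ReA T Ts) + (ImA T Ts).comp (ImA T Ts))) x)
      = 2 * vnormA A (ReA T Ts (ReA T Ts x) + ImA T Ts (ImA T Ts x)) := by
        rw [smul_apply, vnormA_smul, add_apply, comp_apply, comp_apply, norm_ofNat]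
    _ ≤ 2 * (opnormA A (ReA T Ts) ^ 2 * vnormA A x + opnormA A (ImA T Ts) ^ 2 * vnormA A x) := by
      gcongr
      exact (vnormA_add_le hA _ _).trans <| add_le_add
        ((h.reA hA.isSelfAdjoint).vnormA_apply_apply_le hA x)
        ((h.imA hA.isSelfAdjoint).vnormA_apply_apply_le hA x)
    _ = 2 * (opnormA A (ReA T Ts) ^ 2 + opnormA A (ImA T Ts) ^ 2) := by rw [hx]; ring

end IsAAdjoint

theorem stmt5 (A T Ts : H →L[ℂ] H) (hA : A.IsPositive) (hTs : IsAAdjoint A T Ts) :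
    wA A T ≥ Real.sqrt ((1 / 4) * opnormA A (Ts.comp T + T.comp Ts) +
      (1 / 2) * |opnormA A (ReA T Ts) ^ 2 - opnormA A (ImA T Ts) ^ 2|) := by
  have hT := norm_innA_apply_self_le hA (hTs.vnormA_apply_le_sqrt_mul hA)
  have hre : opnormA A (ReA T Ts) ≤ wA A T :=
    ((hTs.reA hA.isSelfAdjoint).opnormA_le_wA hA).trans <| wA_le_wA hT fun x => by
      simpa [hTs.innA_reA_apply_self hA.isSelfAdjoint] using abs_re_le_norm _
  have him : opnormA A (ImA T Ts) ≤ wA A T :=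
    ((hTs.imA hA.isSelfAdjoint).opnormA_le_wA hA).trans <| wA_le_wA hT fun x => by
      simpa [hTs.innA_imA_apply_self hA.isSelfAdjoint] using abs_im_le_norm _
  have hre2 := pow_le_pow_left₀ (opnormA_nonneg _) hre 2
  have him2 := pow_le_pow_left₀ (opnormA_nonneg _) him 2
  have hsum := hTs.opnormA_comp_add_comp_le hA
  refine Real.sqrt_le_iff.2 ⟨wA_nonneg T, ?_⟩
  rcases abs_cases (opnormA A (ReA T Ts) ^ 2 - opnormA A (ImA T Ts) ^ 2) with ⟨h, -⟩ | ⟨h, -⟩ <;>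
    rw [h] <;> linarith
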